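/- Every solution P of the ODE −4·P·P'' + 8·(P')² + P² = 0 that is nowhere zero on an open interval is of the form P(r) = a / cos((r+s)/2) for some real constants a ≠ 0 and s. -/

import Mathlib

lemma const_on_of_hasDerivAt_zero {I : Set ℝ} (hI : IsOpen I) (hc : Convex ℝ I)
    {f : ℝ → ℝ} (hf : ∀ r ∈ I, HasDerivAt f 0 r) {x y : ℝ} (hx : x ∈ I) (hy : y ∈ I) :
    f x = f y := by
  apply hc.is_const_of_fderivWithin_eq_zero
    (fun r hr => ((hf r hr).differentiableAt).differentiableWithinAt) _ hx hy
  intro r hr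
  have h0 : fderivWithin ℝ f I r = ContinuousLinearMap.smulRight (1 : ℝ →L[ℝ] ℝ) (0:ℝ) :=
    (hf r hr).hasFDerivAt.hasFDerivWithinAt.fderivWithin (hI.uniqueDiffWithinAt hr)
  rw [h0]; ext; simp

/-- every nowhere-zero C² solution of `-4 P P'' + 8 (P')² + P² = 0`
on an open interval has the form `P(r) = a / cos((r+s)/2)` with `a ≠ 0`. -/
theorem stmt_1 (I : Set ℝ) (hI : IsOpen I) (hIconn : I.OrdConnected)
    (hne : I.Nonempty) (P : ℝ → ℝ)
    (hP : ContDiffOn ℝ 2 P I)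
    (hP0 : ∀ r ∈ I, P r ≠ 0)
    (hode : ∀ r ∈ I,
      -4 * P r * deriv (deriv P) r + 8 * (deriv P r) ^ 2 + (P r) ^ 2 = 0) :
    ∃ a s : ℝ, a ≠ 0 ∧ ∀ r ∈ I, P r = a / Real.cos ((r + s) / 2) := by
  have hconv : Convex ℝ I := convex_iff_ordConnected.mpr hIconn
  have hPd : DifferentiableOn ℝ P I := hP.differentiableOn (by norm_num)
  have h1 : ContDiffOn ℝ 1 (deriv P) I := hP.deriv_of_isOpen hI (by norm_num)
  have hP1d : DifferentiableOn ℝ (deriv P) I := h1.differentiableOn (by norm_num)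
  have hP' : ∀ r ∈ I, HasDerivAt P (deriv P r) r := fun r hr =>
    ((hPd r hr).differentiableAt (hI.mem_nhds hr)).hasDerivAt
  have hP'' : ∀ r ∈ I, HasDerivAt (deriv P) (deriv (deriv P) r) r := fun r hr =>
    ((hP1d r hr).differentiableAt (hI.mem_nhds hr)).hasDerivAt
  set u : ℝ → ℝ := fun x => (P x)⁻¹ with hu_def
  set v : ℝ → ℝ := fun x => -deriv P x / (P x) ^ 2 with hv_def
  have hu : ∀ r ∈ I, HasDerivAt u (v r) r := fun r hr => (hP' r hr).inv (hP0 r hr)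
  have hv : ∀ r ∈ I, HasDerivAt v (-(u r) / 4) r := by
    intro r hr
    have hd := ((hP'' r hr).neg).div ((hP' r hr).pow 2) (pow_ne_zero 2 (hP0 r hr))
    refine hd.congr_deriv ?_
    have h0 := hP0 r hr
    have hode' := hode r hr
    simp only [hu_def, Pi.pow_apply, Pi.neg_apply]
    field_simp [hu_def]
    ring_nf
    ring_nf at hode'
    linear_combination (P r) * hode'
  -- derivatives of cos(x/2), sin(x/2)
  have hc : ∀ r : ℝ, HasDerivAt (fun x => Real.cos (x / 2)) (-Real.sin (r / 2) * (1 / 2)) r := by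
    intro r
    exact (Real.hasDerivAt_cos (r / 2)).comp r ((hasDerivAt_id r).div_const 2)
  have hs : ∀ r : ℝ, HasDerivAt (fun x => Real.sin (x / 2)) (Real.cos (r / 2) * (1 / 2)) r := by
    intro r
    exact (Real.hasDerivAt_sin (r / 2)).comp r ((hasDerivAt_id r).div_const 2)
  set A : ℝ → ℝ := fun x => u x * Real.cos (x / 2) - 2 * v x * Real.sin (x / 2) with hA_def
  set B : ℝ → ℝ := fun x => u x * Real.sin (x / 2) + 2 * v x * Real.cos (x / 2) with hB_def
  have hA : ∀ r ∈ I, HasDerivAt A 0 r := by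
    intro r hr
    have := ((hu r hr).mul (hc r)).sub ((((hv r hr).const_mul 2)).mul (hs r))
    refine this.congr_deriv ?_
    ring
  have hB : ∀ r ∈ I, HasDerivAt B 0 r := by
    intro r hr
    have := ((hu r hr).mul (hs r)).add ((((hv r hr).const_mul 2)).mul (hc r))
    refine this.congr_deriv ?_
    ring
  obtain ⟨r0, hr0⟩ := hne
  set Av := A r0 with hAv
  set Bv := B r0 with hBv
  have key : ∀ r ∈ I, u r = Av * Real.cos (r / 2) + Bv * Real.sin (r / 2) := by
    intro r hr
    have hAc : A r = Av := const_on_of_hasDerivAt_zero hI hconv hA hr hr0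
    have hBc : B r = Bv := const_on_of_hasDerivAt_zero hI hconv hB hr hr0
    have htrig := Real.sin_sq_add_cos_sq (r / 2)
    rw [← hAc, ← hBc]
    simp only [hA_def, hB_def]
    linear_combination (-(u r)) * htrig
  -- the pair (Av, Bv) is nonzero
  have hz : (⟨Av, Bv⟩ : ℂ) ≠ 0 := by
    intro h
    have hA0 : Av = 0 := congrArg Complex.re h
    have hB0 : Bv = 0 := congrArg Complex.im h
    have := key r0 hr0
    rw [hA0, hB0] at this
    simp at this
    exact hP0 r0 hr0 (by simpa [hu_def] using this)
  set z : ℂ := ⟨Av, Bv⟩ with hz_def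
  set C := ‖z‖ with hC
  have hC0 : C ≠ 0 := norm_ne_zero_iff.mpr hz
  refine ⟨1 / C, -2 * z.arg, by positivity, ?_⟩
  intro r hr
  have hcos : Real.cos ((r + -2 * z.arg) / 2) = u r / C := by
    have : (r + -2 * z.arg) / 2 = r / 2 - z.arg := by ring
    rw [this, Real.cos_sub, Complex.cos_arg hz, Complex.sin_arg z, key r hr]
    simp only [hz_def]
    ring
  rw [hcos]
  have hur : u r ≠ 0 := inv_ne_zero (hP0 r hr)
  have h0 := hP0 r hr
  rw [hu_def]
  field_simp
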